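/- Let w ∈ A₂ on ℝ. Then for every dyadic interval J: Σ_{K⊆J} (⟨w^{-1},h_K⟩)² / ⟨w^{-1}⟩_K² ≲ [w]_{A₂} |J|. -/

import Mathlib

open MeasureTheory Set
open scoped ENNReal

noncomputable section

/-- The dyadic interval `[k·2^n, (k+1)·2^n)` encoded by the pair `p = (n, k)`. -/
def dyad (p : ℤ × ℤ) : Set ℝ := Set.Ico ((p.2 : ℝ) * 2 ^ p.1) (((p.2 : ℝ) + 1) * 2 ^ p.1)

/-- Left half of a dyadic interval. -/
def dLeft (p : ℤ × ℤ) : ℤ × ℤ := (p.1 - 1, 2 * p.2)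

/-- Right half of a dyadic interval. -/
def dRight (p : ℤ × ℤ) : ℤ × ℤ := (p.1 - 1, 2 * p.2 + 1)

/-- Dyadic parent. -/
def dParent (p : ℤ × ℤ) : ℤ × ℤ := (p.1 + 1, Int.fdiv p.2 2)

/-- Length of the dyadic interval. -/
def dLen (p : ℤ × ℤ) : ℝ := 2 ^ p.1

/-- The L²-normalized Haar function `h_I = |I|^{-1/2}(1_{I₋} - 1_{I₊})`. -/
def haarF (p : ℤ × ℤ) : ℝ → ℝ := fun x =>
  (Real.sqrt (dLen p))⁻¹ *
    ((dyad (dLeft p)).indicator (fun _ => (1 : ℝ)) x -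
      (dyad (dRight p)).indicator (fun _ => (1 : ℝ)) x)

/-- The averaging function `h_I^1 = |I|^{-1} 1_I`. -/
def haarAvg (p : ℤ × ℤ) : ℝ → ℝ := fun x =>
  (dLen p)⁻¹ * (dyad p).indicator (fun _ => (1 : ℝ)) x

/-- Haar coefficient `⟨f, h_I⟩`. -/
def hc (f : ℝ → ℝ) (p : ℤ × ℤ) : ℝ := ∫ x, f x * haarF p x

/-- Average `⟨f⟩_I = |I|⁻¹ ∫_I f`. -/
def avg (f : ℝ → ℝ) (p : ℤ × ℤ) : ℝ := (dLen p)⁻¹ * ∫ x in dyad p, f x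

open Classical in
/-- `δ(J, I) = 1` if `J ⊆ I₋` and `-1` otherwise (in particular if `J ⊆ I₊`). -/
def dsgn (q p : ℤ × ℤ) : ℝ := if dyad q ⊆ dyad (dLeft p) then 1 else -1

/-- `𝔰(J) = √2 · Σ_{K : K₋ ⊋ J} |K|⁻¹`. -/
def sfrak (p : ℤ × ℤ) : ℝ :=
  Real.sqrt 2 * ∑' q : {q : ℤ × ℤ // dyad p ⊂ dyad (dLeft q)}, (dLen q.1)⁻¹

/-!
Bellman function argument. Put `B(I) = |I| (1 - 1 / (⟨w⟩_I ⟨w⁻¹⟩_I))`; by Cauchy–Schwarz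
`⟨w⟩_I ⟨w⁻¹⟩_I ≥ 1`, so `0 ≤ B(I) ≤ |I|`. The averages over `I` are the midpoints of those over
its halves, and a quantitative convexity of `(x, y) ↦ (x y)⁻¹` bounds the term of `I` by
`2 [w]_{A₂} (B(I) - B(I₋) - B(I₊))`. Summed over the dyadic tree below `J` this telescopes to at
most `2 [w]_{A₂} B(J) ≤ 2 [w]_{A₂} |J|`.
-/

lemma dLen_pos (p : ℤ × ℤ) : 0 < dLen p := zpow_pos two_pos _

lemma dLen_dLeft (p : ℤ × ℤ) : dLen (dLeft p) = dLen p / 2 := by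
  rw [dLen, dLen, dLeft, zpow_sub_one₀ two_ne_zero, div_eq_mul_inv]

lemma dLen_dRight (p : ℤ × ℤ) : dLen (dRight p) = dLen p / 2 := by
  rw [dLen, dLen, dRight, zpow_sub_one₀ two_ne_zero, div_eq_mul_inv]

lemma measurableSet_dyad (p : ℤ × ℤ) : MeasurableSet (dyad p) := measurableSet_Ico

lemma volume_dyad (p : ℤ × ℤ) : volume (dyad p) = ENNReal.ofReal (dLen p) := by
  rw [dyad, Real.volume_Ico, dLen]
  ring_nf

lemma dyad_nonempty (p : ℤ × ℤ) : (dyad p).Nonempty :=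
  nonempty_Ico.2 (mul_lt_mul_of_pos_right (lt_add_one _) (zpow_pos two_pos _))

lemma Ico_int_mul_subset_or_disjoint {u : ℝ} (hu : 0 < u) (a b c : ℤ) :
    Ico (a * u) ((a + 1) * u) ⊆ Ico (b * u) (c * u) ∨
      Disjoint (Ico (a * u) ((a + 1) * u)) (Ico (b * u) (c * u)) := by
  rcases lt_or_ge a b with hab | hba
  · have hab' : (a : ℝ) + 1 ≤ b := by exact_mod_cast hab
    exact .inr <| Ico_disjoint_Ico.2 <| (min_le_left _ _).trans <|
      (mul_le_mul_of_nonneg_right hab' hu.le).trans (le_max_right _ _)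
  rcases lt_or_ge a c with hac | hca
  · have hac' : (a : ℝ) + 1 ≤ c := by exact_mod_cast hac
    have hba' : (b : ℝ) ≤ a := by exact_mod_cast hba
    exact .inl <| Ico_subset_Ico (mul_le_mul_of_nonneg_right hba' hu.le)
      (mul_le_mul_of_nonneg_right hac' hu.le)
  · have hca' : (c : ℝ) ≤ a := by exact_mod_cast hca
    exact .inr <| Ico_disjoint_Ico.2 <| (min_le_right _ _).trans <|
      (mul_le_mul_of_nonneg_right hca' hu.le).trans (le_max_left _ _)

lemma dyad_eq_Ico_of_fst_eq (p : ℤ × ℤ) {n : ℤ} {m : ℕ} (h : n + m = p.1) :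
    dyad p = Ico (((p.2 * 2 ^ m : ℤ) : ℝ) * 2 ^ n) ((((p.2 + 1) * 2 ^ m : ℤ) : ℝ) * 2 ^ n) := by
  rw [dyad, ← h, zpow_add₀ two_ne_zero, zpow_natCast]
  push_cast
  ring_nf

lemma dyad_subset_or_disjoint {q p : ℤ × ℤ} (h : q.1 ≤ p.1) :
    dyad q ⊆ dyad p ∨ Disjoint (dyad q) (dyad p) := by
  obtain ⟨m, hm⟩ := Int.le.dest h
  rw [dyad_eq_Ico_of_fst_eq p hm]
  exact Ico_int_mul_subset_or_disjoint (zpow_pos two_pos _) _ _ _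

lemma fst_le_of_dyad_subset {q p : ℤ × ℤ} (h : dyad q ⊆ dyad p) : q.1 ≤ p.1 := by
  have hvol := measure_mono (μ := volume) h
  rw [volume_dyad, volume_dyad, ENNReal.ofReal_le_ofReal_iff (dLen_pos p).le] at hvol
  exact (zpow_le_zpow_iff_right₀ one_lt_two).1 hvol

lemma eq_of_dyad_subset_of_fst_eq {q p : ℤ × ℤ} (h : dyad q ⊆ dyad p) (h₁ : q.1 = p.1) :
    q = p := by
  have hu : (0 : ℝ) < 2 ^ p.1 := zpow_pos two_pos _
  rw [dyad, dyad, Ico_subset_Ico_iff (nonempty_Ico.1 (dyad_nonempty q)), h₁] at h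
  have h₂ : (q.2 : ℝ) = p.2 :=
    le_antisymm (by linarith [le_of_mul_le_mul_right h.2 hu]) (le_of_mul_le_mul_right h.1 hu)
  exact Prod.ext h₁ (by exact_mod_cast h₂)

lemma dyad_dLeft_union_dRight (p : ℤ × ℤ) : dyad (dLeft p) ∪ dyad (dRight p) = dyad p := by
  have hu : (0 : ℝ) < 2 ^ (p.1 - 1) := zpow_pos two_pos _
  rw [dyad_eq_Ico_of_fst_eq p (n := p.1 - 1) (m := 1) (by ring), dyad, dyad, dLeft, dRight]
  push_cast
  rw [Ico_union_Ico_eq_Ico (by nlinarith) (by nlinarith)]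
  ring_nf

lemma disjoint_dyad_dLeft_dRight (p : ℤ × ℤ) : Disjoint (dyad (dLeft p)) (dyad (dRight p)) := by
  rw [dyad, dyad, dLeft, dRight]
  push_cast
  exact Ico_disjoint_Ico_same

lemma dyad_subset_dLeft_or_dRight {q p : ℤ × ℤ} (h : dyad q ⊆ dyad p) (hne : q ≠ p) :
    dyad q ⊆ dyad (dLeft p) ∨ dyad q ⊆ dyad (dRight p) := by
  have hlt : q.1 < p.1 :=
    (fst_le_of_dyad_subset h).lt_of_ne fun h₁ => hne (eq_of_dyad_subset_of_fst_eq h h₁)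
  rcases dyad_subset_or_disjoint (p := dLeft p) (Int.le_sub_one_of_lt hlt) with hL | hL
  · exact .inl hL
  rcases dyad_subset_or_disjoint (p := dRight p) (Int.le_sub_one_of_lt hlt) with hR | hR
  · exact .inr hR
  obtain ⟨x, hx⟩ := dyad_nonempty q
  rw [← dyad_dLeft_union_dRight p] at h
  rcases h hx with hx' | hx'
  exacts [(disjoint_left.1 hL hx hx').elim, (disjoint_left.1 hR hx hx').elim]

lemma integrableOn_dyad {f : ℝ → ℝ} (hf : LocallyIntegrable f volume) (p : ℤ × ℤ) :
    IntegrableOn f (dyad p) volume :=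
  (hf.integrableOn_isCompact isCompact_Icc).mono_set Ico_subset_Icc_self

lemma setIntegral_dyad_eq_dLen_mul_avg (f : ℝ → ℝ) (p : ℤ × ℤ) :
    ∫ x in dyad p, f x = dLen p * avg f p :=
  (mul_inv_cancel_left₀ (dLen_pos p).ne' _).symm

lemma avg_eq_add_div_two {f : ℝ → ℝ} (hf : LocallyIntegrable f volume) (p : ℤ × ℤ) :
    avg f p = (avg f (dLeft p) + avg f (dRight p)) / 2 := by
  have hsplit :
      ∫ x in dyad p, f x = (∫ x in dyad (dLeft p), f x) + ∫ x in dyad (dRight p), f x := by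
    rw [← dyad_dLeft_union_dRight p, setIntegral_union (disjoint_dyad_dLeft_dRight p)
      (measurableSet_dyad _) (integrableOn_dyad hf _) (integrableOn_dyad hf _)]
  have hp := dLen_pos p
  rw [avg, hsplit, setIntegral_dyad_eq_dLen_mul_avg, setIntegral_dyad_eq_dLen_mul_avg,
    dLen_dLeft, dLen_dRight]
  field_simp

lemma hc_eq {f : ℝ → ℝ} (hf : LocallyIntegrable f volume) (p : ℤ × ℤ) :
    hc f p = √(dLen p) / 2 * (avg f (dLeft p) - avg f (dRight p)) := by
  have hhaar : (fun x => f x * haarF p x) = fun x => (√(dLen p))⁻¹ *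
      ((dyad (dLeft p)).indicator f x - (dyad (dRight p)).indicator f x) := by
    ext x
    simp only [haarF, indicator]
    split_ifs <;> ring
  rw [hc, hhaar, integral_const_mul,
    integral_sub ((integrable_indicator_iff (measurableSet_dyad _)).2 (integrableOn_dyad hf _))
      ((integrable_indicator_iff (measurableSet_dyad _)).2 (integrableOn_dyad hf _)),
    integral_indicator (measurableSet_dyad _), integral_indicator (measurableSet_dyad _),
    setIntegral_dyad_eq_dLen_mul_avg, setIntegral_dyad_eq_dLen_mul_avg, dLen_dLeft, dLen_dRight,
    ← mul_sub, ← mul_assoc, ← div_eq_inv_mul, div_right_comm, Real.div_sqrt]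

lemma hc_sq_div_avg_sq {f : ℝ → ℝ} (hf : LocallyIntegrable f volume) (p : ℤ × ℤ) :
    hc f p ^ 2 / avg f p ^ 2 = dLen p *
      ((avg f (dLeft p) - avg f (dRight p)) / (avg f (dLeft p) + avg f (dRight p))) ^ 2 := by
  rw [hc_eq hf, avg_eq_add_div_two hf p, mul_pow, div_pow, Real.sq_sqrt (dLen_pos p).le]
  generalize avg f (dLeft p) + avg f (dRight p) = s
  ring

lemma avg_pos {f : ℝ → ℝ} (hf : LocallyIntegrable f volume) (hpos : ∀ x, 0 < f x)
    (p : ℤ × ℤ) : 0 < avg f p := by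
  refine mul_pos (inv_pos.2 (dLen_pos p)) ?_
  rw [setIntegral_pos_iff_support_of_nonneg_ae (.of_forall fun x => (hpos x).le)
    (integrableOn_dyad hf p), Function.support_eq_univ fun x => (hpos x).ne', univ_inter,
    volume_dyad]
  exact ENNReal.ofReal_pos.2 (dLen_pos p)

theorem measureReal_sq_le_setIntegral_mul_setIntegral_inv {α : Type*} [MeasurableSpace α]
    {μ : Measure α} {s : Set α} {f : α → ℝ} (hs : MeasurableSet s) (hf : ∀ x ∈ s, 0 < f x)
    (hfi : IntegrableOn f s μ) (hfi' : IntegrableOn (fun x => (f x)⁻¹) s μ) :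
    μ.real s ^ 2 ≤ (∫ x in s, f x ∂μ) * ∫ x in s, (f x)⁻¹ ∂μ := by
  have hY : 0 ≤ ∫ x in s, (f x)⁻¹ ∂μ := setIntegral_nonneg hs fun x hx => (inv_pos.2 (hf x hx)).le
  rcases measureReal_nonneg.eq_or_lt with hm | hm
  · rw [← hm, sq, zero_mul]
    exact mul_nonneg (setIntegral_nonneg hs fun x hx => (hf x hx).le) hY
  have hμs : μ s ≠ ⊤ := (ENNReal.toReal_pos_iff.1 hm).2.ne
  have hX : 0 < ∫ x in s, f x ∂μ := by
    rw [setIntegral_pos_iff_support_of_nonneg_ae ((ae_restrict_iff' hs).2 (.of_forall fun x hx =>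
      (hf x hx).le)) hfi, inter_eq_right.2 fun x hx => Function.mem_support.2 (hf x hx).ne']
    exact (ENNReal.toReal_pos_iff.1 hm).1
  -- integrate `2 ≤ t f + (t f)⁻¹` with `t = μ(s) / ∫_s f`
  set t := μ.real s / ∫ x in s, f x ∂μ
  have ht : 0 < t := div_pos hm hX
  have hpt : ∀ x ∈ s, 2 ≤ t * f x + t⁻¹ * (f x)⁻¹ := fun x hx => by
    have hu := mul_pos ht (hf x hx)
    rw [← mul_inv]
    nlinarith [mul_inv_cancel₀ hu.ne', sq_nonneg (t * f x - 1), inv_pos.2 hu]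
  have hint := setIntegral_ge_of_const_le hs hμs hpt ((hfi.const_mul t).add (hfi'.const_mul t⁻¹))
  rw [integral_add (hfi.const_mul t) (hfi'.const_mul t⁻¹), integral_const_mul,
    integral_const_mul, smul_eq_mul] at hint
  have htX : t * ∫ x in s, f x ∂μ = μ.real s := div_mul_cancel₀ _ hX.ne'
  have htY : t⁻¹ * ∫ x in s, (f x)⁻¹ ∂μ =
      (∫ x in s, f x ∂μ) * (∫ x in s, (f x)⁻¹ ∂μ) / μ.real s := by
    rw [inv_div]; ring
  rw [htX, htY] at hint
  have hmain : μ.real s ≤ (∫ x in s, f x ∂μ) * (∫ x in s, (f x)⁻¹ ∂μ) / μ.real s := by linarith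
  rwa [le_div_iff₀ hm, ← sq] at hmain

lemma one_le_avg_mul_avg_inv {w : ℝ → ℝ} (hw : ∀ x, 0 < w x) (hwi : LocallyIntegrable w volume)
    (hvi : LocallyIntegrable (fun x => (w x)⁻¹) volume) (p : ℤ × ℤ) :
    1 ≤ avg w p * avg (fun x => (w x)⁻¹) p := by
  have h := measureReal_sq_le_setIntegral_mul_setIntegral_inv (measurableSet_dyad p)
    (fun x _ => hw x) (integrableOn_dyad hwi p) (integrableOn_dyad hvi p)
  rw [measureReal_def, volume_dyad, ENNReal.toReal_ofReal (dLen_pos p).le] at h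
  have hp := dLen_pos p
  rw [avg, avg, mul_mul_mul_comm, ← mul_inv, ← sq, ← div_eq_inv_mul, one_le_div (by positivity)]
  exact h

/-- The Jensen gap of `(x, y) ↦ (x y)⁻¹` between the points `(P, R)` and `(Q, S)`. -/
def jensenGapInvMul (P Q R S : ℝ) : ℝ :=
  ((P * R)⁻¹ + (Q * S)⁻¹) / 2 - ((P + Q) / 2 * ((R + S) / 2))⁻¹

lemma sq_sub_div_add_le_jensenGapInvMul {P Q R S : ℝ} (hP : 0 < P) (hQ : 0 < Q) (hR : 0 < R)
    (hS : 0 < S) :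
    ((R - S) / (R + S)) ^ 2 ≤ 2 * ((P + Q) / 2 * ((R + S) / 2)) * jensenGapInvMul P Q R S := by
  obtain ⟨c, hc, rfl⟩ : ∃ c, 0 < c ∧ c ^ 2 = R := ⟨√R, Real.sqrt_pos.2 hR, Real.sq_sqrt hR.le⟩
  obtain ⟨d, hd, rfl⟩ : ∃ d, 0 < d ∧ d ^ 2 = S := ⟨√S, Real.sqrt_pos.2 hS, Real.sq_sqrt hS.le⟩
  -- after AM-GM in `P, Q`, both sides are functions of `s = (R + S) / (2 √(R S)) ≥ 1`
  have amgm : 2 / (c * d) ≤ P / (Q * d ^ 2) + Q / (P * c ^ 2) := by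
    rw [div_add_div _ _ (by positivity) (by positivity),
      div_le_div_iff₀ (by positivity) (by positivity)]
    nlinarith [sq_nonneg (P * c - Q * d), mul_pos hc hd, mul_pos hP hQ]
  have hrhs : 2 * ((P + Q) / 2 * ((c ^ 2 + d ^ 2) / 2)) * jensenGapInvMul P Q (c ^ 2) (d ^ 2) =
      (c ^ 2 + d ^ 2) / 4 * ((c ^ 2 + d ^ 2) / (c * d) ^ 2 + (P / (Q * d ^ 2) + Q / (P * c ^ 2)))
        - 2 := by
    rw [jensenGapInvMul]
    field_simp
    ring
  set s := (c ^ 2 + d ^ 2) / (2 * (c * d)) with hs_def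
  have hs : 1 ≤ s := by
    rw [le_div_iff₀ (by positivity)]
    nlinarith [sq_nonneg (c - d)]
  have hlhs : ((c ^ 2 - d ^ 2) / (c ^ 2 + d ^ 2)) ^ 2 = 1 - 1 / s ^ 2 := by
    rw [hs_def]; field_simp; ring
  have hbound : (c ^ 2 + d ^ 2) / 4 * ((c ^ 2 + d ^ 2) / (c * d) ^ 2 + 2 / (c * d)) - 2 =
      s ^ 2 + s - 2 := by
    rw [hs_def]; field_simp; ring
  have hpoly : 3 - s ^ 2 - s ≤ 1 / s ^ 2 := by
    rw [le_div_iff₀ (by positivity)]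
    nlinarith [mul_nonneg (sub_nonneg.2 hs) (sub_nonneg.2 hs),
      mul_nonneg (sub_nonneg.2 hs) (sq_nonneg s)]
  rw [hrhs, hlhs]
  calc 1 - 1 / s ^ 2 ≤ s ^ 2 + s - 2 := by linarith
    _ = _ := hbound.symm
    _ ≤ _ := by gcongr

lemma jensenGapInvMul_nonneg {P Q R S : ℝ} (hP : 0 < P) (hQ : 0 < Q) (hR : 0 < R)
    (hS : 0 < S) : 0 ≤ jensenGapInvMul P Q R S :=
  nonneg_of_mul_nonneg_right ((sq_nonneg _).trans (sq_sub_div_add_le_jensenGapInvMul hP hQ hR hS))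
    (by positivity)

def bellman (w : ℝ → ℝ) (p : ℤ × ℤ) : ℝ :=
  dLen p * (1 - (avg w p * avg (fun x => (w x)⁻¹) p)⁻¹)

section Bellman

variable {w : ℝ → ℝ}

lemma bellman_nonneg (hw : ∀ x, 0 < w x) (hwi : LocallyIntegrable w volume)
    (hvi : LocallyIntegrable (fun x => (w x)⁻¹) volume) (p : ℤ × ℤ) : 0 ≤ bellman w p :=
  mul_nonneg (dLen_pos p).le
    (sub_nonneg.2 (inv_le_one_of_one_le₀ (one_le_avg_mul_avg_inv hw hwi hvi p)))

lemma bellman_le_dLen (hw : ∀ x, 0 < w x) (hwi : LocallyIntegrable w volume)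
    (hvi : LocallyIntegrable (fun x => (w x)⁻¹) volume) (p : ℤ × ℤ) : bellman w p ≤ dLen p :=
  mul_le_of_le_one_right (dLen_pos p).le (sub_le_self _ (inv_nonneg.2
    (zero_le_one.trans (one_le_avg_mul_avg_inv hw hwi hvi p))))

lemma bellman_sub_bellman_dLeft_sub_bellman_dRight (hwi : LocallyIntegrable w volume)
    (hvi : LocallyIntegrable (fun x => (w x)⁻¹) volume) (p : ℤ × ℤ) :
    bellman w p - bellman w (dLeft p) - bellman w (dRight p) =
      dLen p * jensenGapInvMul (avg w (dLeft p)) (avg w (dRight p))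
        (avg (fun x => (w x)⁻¹) (dLeft p)) (avg (fun x => (w x)⁻¹) (dRight p)) := by
  rw [bellman, bellman, bellman, avg_eq_add_div_two hwi p, avg_eq_add_div_two hvi p, dLen_dLeft,
    dLen_dRight, jensenGapInvMul]
  ring

lemma bellman_dLeft_add_bellman_dRight_le (hw : ∀ x, 0 < w x) (hwi : LocallyIntegrable w volume)
    (hvi : LocallyIntegrable (fun x => (w x)⁻¹) volume) (p : ℤ × ℤ) :
    bellman w (dLeft p) + bellman w (dRight p) ≤ bellman w p := by
  have hv : ∀ x, 0 < (w x)⁻¹ := fun x => inv_pos.2 (hw x)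
  have hgap := mul_nonneg (dLen_pos p).le <| jensenGapInvMul_nonneg (avg_pos hwi hw (dLeft p))
    (avg_pos hwi hw (dRight p)) (avg_pos hvi hv (dLeft p)) (avg_pos hvi hv (dRight p))
  rw [← bellman_sub_bellman_dLeft_sub_bellman_dRight hwi hvi] at hgap
  linarith

lemma hc_inv_sq_div_avg_inv_sq_le (hw : ∀ x, 0 < w x) (hwi : LocallyIntegrable w volume)
    (hvi : LocallyIntegrable (fun x => (w x)⁻¹) volume) {A : ℝ} {p : ℤ × ℤ}
    (hA : avg w p * avg (fun x => (w x)⁻¹) p ≤ A) :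
    hc (fun x => (w x)⁻¹) p ^ 2 / avg (fun x => (w x)⁻¹) p ^ 2 ≤
      2 * A * (bellman w p - bellman w (dLeft p) - bellman w (dRight p)) := by
  have hv : ∀ x, 0 < (w x)⁻¹ := fun x => inv_pos.2 (hw x)
  have hP := avg_pos hwi hw (dLeft p)
  have hQ := avg_pos hwi hw (dRight p)
  have hR := avg_pos hvi hv (dLeft p)
  have hS := avg_pos hvi hv (dRight p)
  have hkey := sq_sub_div_add_le_jensenGapInvMul hP hQ hR hS
  rw [← avg_eq_add_div_two hwi, ← avg_eq_add_div_two hvi] at hkey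
  rw [hc_sq_div_avg_sq hvi, bellman_sub_bellman_dLeft_sub_bellman_dRight hwi hvi]
  calc _ ≤ dLen p * (2 * (avg w p * avg (fun x => (w x)⁻¹) p) * jensenGapInvMul _ _ _ _) :=
        mul_le_mul_of_nonneg_left hkey (dLen_pos p).le
    _ ≤ dLen p * (2 * A * jensenGapInvMul _ _ _ _) :=
        mul_le_mul_of_nonneg_left (mul_le_mul_of_nonneg_right (by linarith)
          (jensenGapInvMul_nonneg hP hQ hR hS)) (dLen_pos p).le
    _ = _ := by ring

end Bellman

theorem sum_sub_dLeft_sub_dRight_le {φ : ℤ × ℤ → ℝ} (hφ : ∀ q, 0 ≤ φ q)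
    (hsup : ∀ q, φ (dLeft q) + φ (dRight q) ≤ φ q) (p : ℤ × ℤ) (F : Finset (ℤ × ℤ))
    (hF : ∀ q ∈ F, dyad q ⊆ dyad p) :
    ∑ q ∈ F, (φ q - φ (dLeft q) - φ (dRight q)) ≤ φ p := by
  classical
  obtain ⟨n, hn⟩ : ∃ n : ℕ, ∀ q ∈ F, p.1 - q.1 < n :=
    ⟨(F.sup fun q => (p.1 - q.1).toNat) + 1, fun q hq => by
      have := Finset.le_sup (f := fun q => (p.1 - q.1).toNat) hq
      omega⟩
  induction n generalizing p F with
  | zero =>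
    have hF₀ : F = ∅ := Finset.eq_empty_of_forall_notMem fun q hq => by
      have := fst_le_of_dyad_subset (hF q hq); have := hn q hq; omega
    simpa [hF₀] using hφ p
  | succ n ih =>
    set FL := (F.erase p).filter fun q => dyad q ⊆ dyad (dLeft p)
    set FR := (F.erase p).filter fun q => ¬dyad q ⊆ dyad (dLeft p)
    have hL : ∑ q ∈ FL, (φ q - φ (dLeft q) - φ (dRight q)) ≤ φ (dLeft p) :=
      ih (dLeft p) FL (fun q hq => (Finset.mem_filter.1 hq).2) fun q hq => by
        have := hn q (Finset.mem_of_mem_erase (Finset.mem_filter.1 hq).1)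
        simp only [dLeft]; omega
    have hR : ∑ q ∈ FR, (φ q - φ (dLeft q) - φ (dRight q)) ≤ φ (dRight p) := by
      refine ih (dRight p) FR (fun q hq => ?_) fun q hq => ?_
      · obtain ⟨hqF, hnot⟩ := Finset.mem_filter.1 hq
        exact ((dyad_subset_dLeft_or_dRight (hF q (Finset.mem_of_mem_erase hqF))
          (Finset.ne_of_mem_erase hqF)).resolve_left hnot)
      · have := hn q (Finset.mem_of_mem_erase (Finset.mem_filter.1 hq).1)
        simp only [dRight]; omega
    have herase : ∑ q ∈ F, (φ q - φ (dLeft q) - φ (dRight q)) ≤ (φ p - φ (dLeft p) - φ (dRight p))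
        + ∑ q ∈ F.erase p, (φ q - φ (dLeft q) - φ (dRight q)) := by
      by_cases hp : p ∈ F
      · exact (Finset.add_sum_erase F (fun q => φ q - φ (dLeft q) - φ (dRight q)) hp).ge
      · rw [Finset.erase_eq_of_notMem hp]
        linarith [hsup p]
    rw [← Finset.sum_filter_add_sum_filter_not (F.erase p)
      fun q => dyad q ⊆ dyad (dLeft p)] at herase
    linarith

/-- `Σ_{K⊆J} ⟨w^{-1},h_K⟩² / ⟨w^{-1}⟩_K² ≲ [w]_{A₂} |J|`. -/
theorem statement11 :
    ∃ C : ℝ, 0 < C ∧ ∀ (w : ℝ → ℝ), (∀ x, 0 < w x) →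
      LocallyIntegrable w volume → LocallyIntegrable (fun x => (w x)⁻¹) volume →
      ∀ A : ℝ, (∀ p : ℤ × ℤ, avg w p * avg (fun x => (w x)⁻¹) p ≤ A) →
      ∀ p : ℤ × ℤ, ∀ F : Finset (ℤ × ℤ), (∀ q ∈ F, dyad q ⊆ dyad p) →
        ∑ q ∈ F, (hc (fun x => (w x)⁻¹) q) ^ 2 / (avg (fun x => (w x)⁻¹) q) ^ 2 ≤
          C * A * dLen p := by
  refine ⟨2, two_pos, fun w hw hwi hvi A hA p F hF => ?_⟩
  have hA₀ : 0 ≤ 2 * A := by linarith [one_le_avg_mul_avg_inv hw hwi hvi p, hA p]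
  calc ∑ q ∈ F, hc (fun x => (w x)⁻¹) q ^ 2 / avg (fun x => (w x)⁻¹) q ^ 2
      ≤ ∑ q ∈ F, 2 * A * (bellman w q - bellman w (dLeft q) - bellman w (dRight q)) :=
        Finset.sum_le_sum fun q _ => hc_inv_sq_div_avg_inv_sq_le hw hwi hvi (hA q)
    _ = 2 * A * ∑ q ∈ F, (bellman w q - bellman w (dLeft q) - bellman w (dRight q)) :=
        (Finset.mul_sum _ _ _).symm
    _ ≤ 2 * A * bellman w p :=
        mul_le_mul_of_nonneg_left (sum_sub_dLeft_sub_dRight_le (bellman_nonneg hw hwi hvi)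
          (bellman_dLeft_add_bellman_dRight_le hw hwi hvi) p F hF) hA₀
    _ ≤ 2 * A * dLen p := mul_le_mul_of_nonneg_left (bellman_le_dLen hw hwi hvi p) hA₀
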